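/- For every n ≥ 2, the abelianization of the inverse braid monoid IBₙ (the quotient of IBₙ by the congruence generated by all relations uv = vu) is isomorphic to the commutative monoid defined by the presentation with generators ε, α, α′ and relations αα′ = 1, ε² = ε, and εα = ε (together with commutativity of all generators); i.e., it is the quotient of 𝓔 ⊕ ℤ by the relation ε + 1 = ε, where 𝓔 is the monoid generated by one idempotent generator ε. Under the abelianization map, every εᵢ is sent to ε and every σᵢ is sent to α. -/

import Mathlib

/-!
STATEMENT 19: For every n ≥ 2, the abelianization of the inverse braid
monoid IBₙ (its quotient by the congruence generated by uv = vu) is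
isomorphic to the commutative monoid presented by generators ε, α, α′ with
relations αα′ = 1, ε² = ε, εα = ε, together with commutativity of all
generators (equivalently, the quotient of 𝓔 ⊕ ℤ by ε + 1 = ε).  Under the
abelianization map every εᵢ is sent to ε and every σᵢ to α.
-/
open FreeMonoid

/-- Generators of the inverse braid monoid `IBₙ`: `σᵢ`, `σᵢ⁻¹`
(index `i : Fin (n-1)` stands for subscript `i+1`) and `ε₁, …, εₙ`
(as `eps j`, `j : Fin n`, `j` standing for `ε_{j+1}`). -/
inductive IBGen (n : ℕ) : Type
  | sig (i : Fin (n - 1)) : IBGen n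
  | sinv (i : Fin (n - 1)) : IBGen n
  | eps (j : Fin n) : IBGen n

open IBGen in
/-- The defining relations of the inverse braid monoid `IBₙ`. -/
inductive ibRel (n : ℕ) : FreeMonoid (IBGen n) → FreeMonoid (IBGen n) → Prop
  | braid_comm (i j : Fin (n - 1)) (h : i.val + 1 < j.val ∨ j.val + 1 < i.val) :
      ibRel n (of (sig i) * of (sig j)) (of (sig j) * of (sig i))
  | braid (i j : Fin (n - 1)) (h : j.val = i.val + 1) :
      ibRel n (of (sig i) * of (sig j) * of (sig i))
              (of (sig j) * of (sig i) * of (sig j))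
  | inv_right (i : Fin (n - 1)) : ibRel n (of (sig i) * of (sinv i)) 1
  | inv_left (i : Fin (n - 1)) : ibRel n (of (sinv i) * of (sig i)) 1
  | eps_comm (j : Fin n) (i : Fin (n - 1))
      (h : j.val ≠ i.val ∧ j.val ≠ i.val + 1) :
      ibRel n (of (eps j) * of (sig i)) (of (sig i) * of (eps j))
  | eps_shift₁ (i : Fin (n - 1)) :
      ibRel n (of (eps ⟨i.val, by have := i.isLt; omega⟩) * of (sig i))
              (of (sig i) * of (eps ⟨i.val + 1, by have := i.isLt; omega⟩))
  | eps_shift₂ (i : Fin (n - 1)) :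
      ibRel n (of (eps ⟨i.val + 1, by have := i.isLt; omega⟩) * of (sig i))
              (of (sig i) * of (eps ⟨i.val, by have := i.isLt; omega⟩))
  | idem (j : Fin n) : ibRel n (of (eps j)) (of (eps j) * of (eps j))
  | eps_sq₁ (i : Fin (n - 1)) :
      ibRel n (of (eps ⟨i.val + 1, by have := i.isLt; omega⟩) * of (sig i) * of (sig i))
              (of (eps ⟨i.val + 1, by have := i.isLt; omega⟩))
  | eps_sq₂ (i : Fin (n - 1)) :
      ibRel n (of (sig i) * of (sig i) * of (eps ⟨i.val + 1, by have := i.isLt; omega⟩))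
              (of (eps ⟨i.val + 1, by have := i.isLt; omega⟩))
  | eps_pair₁ (i : Fin (n - 1)) :
      ibRel n (of (eps ⟨i.val, by have := i.isLt; omega⟩) *
               of (eps ⟨i.val + 1, by have := i.isLt; omega⟩) * of (sig i))
              (of (sig i) * of (eps ⟨i.val, by have := i.isLt; omega⟩) *
               of (eps ⟨i.val + 1, by have := i.isLt; omega⟩))
  | eps_pair₂ (i : Fin (n - 1)) :
      ibRel n (of (eps ⟨i.val, by have := i.isLt; omega⟩) *
               of (eps ⟨i.val + 1, by have := i.isLt; omega⟩) * of (sig i))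
              (of (eps ⟨i.val, by have := i.isLt; omega⟩) *
               of (eps ⟨i.val + 1, by have := i.isLt; omega⟩))

/-- The inverse braid monoid `IBₙ`. -/
def InvBraidMonoid (n : ℕ) : Type := PresentedMonoid (ibRel n)

instance (n : ℕ) : Monoid (InvBraidMonoid n) :=
  inferInstanceAs (Monoid (PresentedMonoid (ibRel n)))

/-- The canonical projection from the free monoid to `IBₙ`. -/
def ibWordM (n : ℕ) (w : FreeMonoid (IBGen n)) : InvBraidMonoid n :=
  PresentedMonoid.mk (ibRel n) w

/-- `σ_k` (1-based index) as a word in the free monoid on the generators of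
`IBₙ` (the unit on out-of-range indices). -/
def sgw (n k : ℕ) : FreeMonoid (IBGen n) :=
  if h : 1 ≤ k ∧ k ≤ n - 1 then of (IBGen.sig ⟨k - 1, by omega⟩) else 1

/-- `ε_k` (1-based index) as a word in the free monoid on the generators of
`IBₙ`. -/
def epw (n k : ℕ) : FreeMonoid (IBGen n) :=
  if h : 1 ≤ k ∧ k ≤ n then of (IBGen.eps ⟨k - 1, by omega⟩) else 1

/-- The Garside fundamental word
`Δ = (σ₁⋯σₙ₋₁)(σ₁⋯σₙ₋₂)⋯(σ₁σ₂)σ₁`. -/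
def garsideWord (n : ℕ) : FreeMonoid (IBGen n) :=
  ((List.range (n - 1)).map
    (fun k => ((List.range (n - 1 - k)).map (fun j => sgw n (j + 1))).prod)).prod

/-- The Garside fundamental element `Δ` of `IBₙ`. -/
def garsideM (n : ℕ) : InvBraidMonoid n := ibWordM n (garsideWord n)

/-- The abelianization congruence on `IBₙ`, generated by all relations
`uv = vu`. -/
def abCon (n : ℕ) : Con (InvBraidMonoid n) :=
  conGen (fun x y => ∃ u v : InvBraidMonoid n, x = u * v ∧ y = v * u)

/-- The abelianization of the inverse braid monoid `IBₙ`. -/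
def AbInvBraidMonoid (n : ℕ) : Type := (abCon n).Quotient

instance (n : ℕ) : Monoid (AbInvBraidMonoid n) :=
  inferInstanceAs (Monoid ((abCon n).Quotient))

/-- The canonical abelianization map `IBₙ → Ab(IBₙ)`. -/
def abMap (n : ℕ) (x : InvBraidMonoid n) : AbInvBraidMonoid n :=
  Con.mk' (abCon n) x

/-- The generators ε, α and α′ of the target commutative monoid. -/
inductive AbGen : Type
  | e : AbGen
  | al : AbGen
  | ali : AbGen

open AbGen in
/-- The relations of the target commutative monoid: commutativity of all
generators, `αα′ = 1`, `ε² = ε` and `εα = ε`. -/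
inductive abRel : FreeMonoid AbGen → FreeMonoid AbGen → Prop
  | comm (g h : AbGen) : abRel (of g * of h) (of h * of g)
  | inv : abRel (of al * of ali) 1
  | idem : abRel (of e * of e) (of e)
  | absorb : abRel (of e * of al) (of e)

/-!
In the abelianization the units `σᵢ` can be cancelled, so the braid relation
`σᵢσᵢ₊₁σᵢ = σᵢ₊₁σᵢσᵢ₊₁` forces `σᵢ = σᵢ₊₁` and `εᵢσᵢ = σᵢεᵢ₊₁` forces `εᵢ = εᵢ₊₁`: all `σᵢ`
collapse to one unit `α` (with inverse the common image `α′` of the `σᵢ⁻¹`) and all `εᵢ` to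
one idempotent `ε`, and `εᵢεᵢ₊₁σᵢ = εᵢεᵢ₊₁` becomes `εα = ε`. Conversely, every defining
relation of `IBₙ` holds in the commutative monoid `⟨ε, α, α′ | αα′ = 1, ε² = ε, εα = ε⟩`, so
the two maps are mutually inverse.
-/

open PresentedMonoid

theorem PresentedMonoid.mul_comm_of_forall_of_comm {α : Type*}
    {rels : FreeMonoid α → FreeMonoid α → Prop}
    (h : ∀ a b : α, of rels a * of rels b = of rels b * of rels a) (x y : PresentedMonoid rels) :
    x * y = y * x := by
  have hle := Submonoid.closure_le_centralizer_centralizer (Set.range (of rels))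
  rw [closure_range_of] at hle
  exact Set.centralizer_centralizer_comm_of_comm (by rintro _ ⟨a, rfl⟩ _ ⟨b, rfl⟩; exact h a b)
    x (hle trivial) y (hle trivial)

theorem PresentedMonoid.of_mul_of_eq_of_rel {α : Type*}
    {rels : FreeMonoid α → FreeMonoid α → Prop} {a b : α} {w : FreeMonoid α}
    (h : rels (.of a * .of b) w) :
    of rels a * of rels b = mk rels w := by
  rw [PresentedMonoid.of, PresentedMonoid.of, ← map_mul]
  exact mk_eq_mk_of_rel h

theorem eq_of_braid_of_isUnit {M : Type*} [CommMonoid M] {a b : M} (ha : IsUnit a)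
    (hb : IsUnit b) (h : a * b * a = b * a * b) : a = b :=
  (ha.mul hb).mul_left_cancel (by rw [h, mul_comm b a])

theorem Fin.apply_eq_apply_of_forall_succ {α : Type*} {m : ℕ} (f : Fin m → α)
    (h : ∀ (k : ℕ) (hk : k + 1 < m), f ⟨k, by omega⟩ = f ⟨k + 1, hk⟩) (i j : Fin m) :
    f i = f j := by
  have hm : 0 < m := i.pos
  suffices key : ∀ i : Fin m, f i = f ⟨0, hm⟩ by rw [key i, key j]
  rintro ⟨k, hk⟩
  induction k with
  | zero => rfl
  | succ k ih => rw [← h k hk, ih]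

instance : CommMonoid (PresentedMonoid abRel) where
  mul_comm := mul_comm_of_forall_of_comm fun a b =>
    (of_mul_of_eq_of_rel (abRel.comm a b)).trans <| by
      rw [PresentedMonoid.of, PresentedMonoid.of, map_mul]

theorem of_al_mul_of_ali : of abRel .al * of abRel .ali = 1 :=
  of_mul_of_eq_of_rel abRel.inv

theorem of_e_mul_of_e : of abRel .e * of abRel .e = of abRel .e :=
  of_mul_of_eq_of_rel abRel.idem

theorem of_e_mul_of_al : of abRel .e * of abRel .al = of abRel .e :=
  of_mul_of_eq_of_rel abRel.absorb

namespace AbInvBraidMonoid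

open IBGen AbGen

variable {n : ℕ}

instance : CommMonoid (AbInvBraidMonoid n) where
  mul_comm x y := Con.induction_on₂ x y fun u v =>
    (Con.eq (abCon n)).mpr (ConGen.Rel.of _ _ ⟨u, v, rfl, rfl⟩)

def lift {M : Type*} [CommMonoid M] (f : InvBraidMonoid n →* M) : AbInvBraidMonoid n →* M :=
  Con.lift (abCon n) f <| Con.conGen_le.mpr <| by
    rintro _ _ ⟨u, v, rfl, rfl⟩
    rw [Con.ker_rel, map_mul, map_mul, mul_comm]

def wordHom (n : ℕ) : FreeMonoid (IBGen n) →* AbInvBraidMonoid n :=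
  (Con.mk' (abCon n)).comp (mk (ibRel n))

def gen (g : IBGen n) : AbInvBraidMonoid n :=
  abMap n (PresentedMonoid.of (ibRel n) g)

theorem hom_ext {M : Type*} [Monoid M] {f g : AbInvBraidMonoid n →* M}
    (h : ∀ x, f (gen x) = g (gen x)) : f = g :=
  Con.hom_ext (PresentedMonoid.ext _ h)

theorem wordHom_of (g : IBGen n) : wordHom n (FreeMonoid.of g) = gen g :=
  rfl

theorem wordHom_eq_of_rel {a b : FreeMonoid (IBGen n)} (h : ibRel n a b) :
    wordHom n a = wordHom n b :=
  congrArg (Con.mk' (abCon n)) (mk_eq_mk_of_rel h)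

theorem gen_sig_mul_gen_sinv (i : Fin (n - 1)) : gen (sig i) * gen (sinv i) = 1 := by
  simpa only [map_mul, map_one, wordHom_of] using wordHom_eq_of_rel (ibRel.inv_right i)

theorem isUnit_gen_sig (i : Fin (n - 1)) : IsUnit (gen (sig i)) :=
  IsUnit.of_mul_eq_one _ (gen_sig_mul_gen_sinv i)

theorem gen_sig_eq (i j : Fin (n - 1)) : gen (sig i) = gen (sig j) := by
  refine Fin.apply_eq_apply_of_forall_succ (gen ∘ sig) (fun k hk => ?_) i j
  refine eq_of_braid_of_isUnit (isUnit_gen_sig _) (isUnit_gen_sig _) ?_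
  simpa only [map_mul, wordHom_of, Function.comp_apply] using
    wordHom_eq_of_rel (ibRel.braid ⟨k, by omega⟩ ⟨k + 1, hk⟩ rfl)

theorem gen_sinv_eq (i j : Fin (n - 1)) : gen (sinv i) = gen (sinv j) :=
  left_inv_eq_right_inv (by rw [mul_comm, gen_sig_eq j i, gen_sig_mul_gen_sinv])
    (gen_sig_mul_gen_sinv j)

theorem gen_eps_eq (j j' : Fin n) : gen (eps j) = gen (eps j') := by
  refine Fin.apply_eq_apply_of_forall_succ (gen ∘ eps) (fun k hk => ?_) j j'
  have hshift := wordHom_eq_of_rel (ibRel.eps_shift₁ (n := n) ⟨k, by omega⟩)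
  simp only [map_mul, wordHom_of] at hshift
  exact (isUnit_gen_sig _).mul_right_cancel (hshift.trans (mul_comm _ _))

theorem gen_eps_mul_gen_eps (j : Fin n) : gen (eps j) * gen (eps j) = gen (eps j) := by
  simpa only [map_mul, wordHom_of] using (wordHom_eq_of_rel (ibRel.idem j)).symm

theorem gen_eps_mul_gen_sig (j : Fin n) (i : Fin (n - 1)) :
    gen (eps j) * gen (sig i) = gen (eps j) := by
  have hpair := wordHom_eq_of_rel (ibRel.eps_pair₂ i)
  simp only [map_mul, wordHom_of] at hpair
  rwa [gen_eps_eq _ j, gen_eps_eq ⟨i + 1, _⟩ j, gen_eps_mul_gen_eps] at hpair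

def toPresentedGen : IBGen n → PresentedMonoid abRel
  | sig _ => of abRel al
  | sinv _ => of abRel ali
  | eps _ => of abRel e

def toPresented (n : ℕ) : AbInvBraidMonoid n →* PresentedMonoid abRel :=
  lift <| PresentedMonoid.lift toPresentedGen fun a b h => by
    cases h <;>
      simp only [map_mul, map_one, FreeMonoid.lift_eval_of, toPresentedGen] <;>
      grind [of_al_mul_of_ali, of_e_mul_of_e, of_e_mul_of_al]

def ofPresentedGen (hn : 2 ≤ n) : AbGen → AbInvBraidMonoid n
  | e => gen (eps ⟨0, by omega⟩)
  | al => gen (sig ⟨0, by omega⟩)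
  | ali => gen (sinv ⟨0, by omega⟩)

def ofPresented (hn : 2 ≤ n) : PresentedMonoid abRel →* AbInvBraidMonoid n :=
  PresentedMonoid.lift (ofPresentedGen hn) fun a b h => by
    cases h <;> simp only [map_mul, map_one, FreeMonoid.lift_eval_of, ofPresentedGen]
    case comm => exact mul_comm _ _
    case inv => exact gen_sig_mul_gen_sinv _
    case idem => exact gen_eps_mul_gen_eps _
    case absorb => exact gen_eps_mul_gen_sig _ _

end AbInvBraidMonoid

theorem abelianization_of_inverse_braid_monoid (n : ℕ) (hn : 2 ≤ n) :
    ∃ e : AbInvBraidMonoid n ≃* PresentedMonoid abRel,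
      (∀ j : Fin n,
        e (abMap n (PresentedMonoid.of (ibRel n) (IBGen.eps j))) =
          PresentedMonoid.of abRel AbGen.e) ∧
      (∀ i : Fin (n - 1),
        e (abMap n (PresentedMonoid.of (ibRel n) (IBGen.sig i))) =
          PresentedMonoid.of abRel AbGen.al) := by
  refine ⟨(AbInvBraidMonoid.toPresented n).toMulEquiv (AbInvBraidMonoid.ofPresented hn) ?_ ?_,
    fun _ => rfl, fun _ => rfl⟩
  · refine AbInvBraidMonoid.hom_ext fun g => ?_
    cases g
    · exact AbInvBraidMonoid.gen_sig_eq _ _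
    · exact AbInvBraidMonoid.gen_sinv_eq _ _
    · exact AbInvBraidMonoid.gen_eps_eq _ _
  · ext g
    cases g <;> rfl
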